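/- arXiv:1811.07395 — 4 statements merged into one kernel-verified Lean document; each statement's English description precedes it below -/
import Mathlib

section
/- Let 𝔤 be a finite-dimensional real Lie algebra and 𝔤* its dual space. For F ∈ C^∞(𝔤*) and ξ ∈ 𝔤*, let dF(ξ) ∈ 𝔤 denote the element corresponding to the Fréchet derivative DF(ξ) ∈ (𝔤*)* under the canonical isomorphism 𝔤 ≅ 𝔤**. Then the bracket {F,G}(ξ) := ⟨ξ, [dF(ξ), dG(ξ)]⟩ makes C^∞(𝔤*), with pointwise multiplication, a Poisson algebra: it is ℝ-bilinear, antisymmetric, satisfies the Jacobi identity, and is a derivation in each argument. -/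
/-!
The map `F ↦ dF(ξ)` is linear and obeys the Leibniz rule because `F ↦ DF(ξ)` does, which gives
bilinearity and the derivation property; antisymmetry is that of `[·,·]`. For the Jacobi
identity, differentiating `{G,H}(η) = ⟨η, [dG(η), dH(η)]⟩` at `ξ` (possible since `𝔤 ≅ 𝔤**`
is a continuous isomorphism in finite dimension) gives
`{F,{G,H}}(ξ) = ⟨ξ, [dF,[dG,dH]]⟩ - D²G(ξ)(ad*_F, ad*_H) + D²H(ξ)(ad*_F, ad*_G)`
with `ad*_K = ⟨ξ, [dK(ξ), ·]⟩`. In the cyclic sum the first terms cancel by the Jacobi identity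
of `𝔤` and the second-derivative terms cancel in pairs by symmetry of the Hessian.
-/

section DoubleDual

variable {𝕜 E : Type*} [RCLike 𝕜] [NormedAddCommGroup E] [NormedSpace 𝕜 E] [FiniteDimensional 𝕜 E]

theorem finrank_strongDual : Module.finrank 𝕜 (StrongDual 𝕜 E) = Module.finrank 𝕜 E := by
  rw [← (LinearMap.toContinuousLinearMap (E := E) (F' := 𝕜)).finrank_eq,
    Module.finrank_linearMap_self]

variable (𝕜 E) in
noncomputable def doubleDualEquiv : E ≃L[𝕜] StrongDual 𝕜 (StrongDual 𝕜 E) :=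
  LinearEquiv.toContinuousLinearEquiv (E := E) (F := StrongDual 𝕜 (StrongDual 𝕜 E)) <|
    LinearEquiv.ofInjectiveOfFinrankEq (V' := StrongDual 𝕜 (StrongDual 𝕜 E))
      (NormedSpace.inclusionInDoubleDual 𝕜 E).toLinearMap
      (fun _ _ h => (SeparatingDual.eq_iff_forall_dual_eq (R := 𝕜)).2 (DFunLike.congr_fun h))
      (by rw [finrank_strongDual, finrank_strongDual])

@[simp]
theorem doubleDualEquiv_apply (x : E) (φ : StrongDual 𝕜 E) : doubleDualEquiv 𝕜 E x φ = φ x :=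
  rfl

@[simp]
theorem apply_doubleDualEquiv_symm_apply (X : StrongDual 𝕜 (StrongDual 𝕜 E))
    (φ : StrongDual 𝕜 E) : φ ((doubleDualEquiv 𝕜 E).symm X) = X φ := by
  conv_rhs => rw [← (doubleDualEquiv 𝕜 E).apply_symm_apply X]
  rfl

end DoubleDual

section LiePoisson

variable {𝕜 E : Type*} [RCLike 𝕜] [NormedAddCommGroup E] [NormedSpace 𝕜 E]
  {d : (StrongDual 𝕜 E → 𝕜) → StrongDual 𝕜 E → E} {F G H : StrongDual 𝕜 E → 𝕜}
  {ξ : StrongDual 𝕜 E}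

def IsDualGradient (d : (StrongDual 𝕜 E → 𝕜) → StrongDual 𝕜 E → E) : Prop :=
  ∀ (F : StrongDual 𝕜 E → 𝕜) (ξ φ : StrongDual 𝕜 E), fderiv 𝕜 F ξ φ = φ (d F ξ)

def liePoissonBracket (B : E →L[𝕜] E →L[𝕜] E) (d : (StrongDual 𝕜 E → 𝕜) → StrongDual 𝕜 E → E)
    (F G : StrongDual 𝕜 E → 𝕜) (η : StrongDual 𝕜 E) : 𝕜 :=
  η (B (d F η) (d G η))

namespace IsDualGradient

theorem add (hd : IsDualGradient d) (hF : DifferentiableAt 𝕜 F ξ)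
    (hG : DifferentiableAt 𝕜 G ξ) : d (fun η => F η + G η) ξ = d F ξ + d G ξ := by
  refine (SeparatingDual.eq_iff_forall_dual_eq (R := 𝕜)).2 fun φ => ?_
  rw [← hd _ _ φ, fderiv_fun_add hF hG, _root_.add_apply, hd F, hd G, map_add]

theorem const_mul (hd : IsDualGradient d) (hF : DifferentiableAt 𝕜 F ξ) (c : 𝕜) :
    d (fun η => c * F η) ξ = c • d F ξ := by
  refine (SeparatingDual.eq_iff_forall_dual_eq (R := 𝕜)).2 fun φ => ?_
  rw [← hd _ _ φ, fderiv_const_mul hF, _root_.smul_apply, hd F, map_smul, smul_eq_mul]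

theorem mul (hd : IsDualGradient d) (hF : DifferentiableAt 𝕜 F ξ)
    (hG : DifferentiableAt 𝕜 G ξ) : d (fun η => F η * G η) ξ = F ξ • d G ξ + G ξ • d F ξ := by
  refine (SeparatingDual.eq_iff_forall_dual_eq (R := 𝕜)).2 fun φ => ?_
  rw [← hd _ _ φ, fderiv_fun_mul hF hG]
  simp only [_root_.add_apply, _root_.smul_apply, hd F, hd G, map_add, map_smul]

variable [FiniteDimensional 𝕜 E]

theorem eq_doubleDualEquiv_symm (hd : IsDualGradient d) (F : StrongDual 𝕜 E → 𝕜)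
    (ξ : StrongDual 𝕜 E) : d F ξ = (doubleDualEquiv 𝕜 E).symm (fderiv 𝕜 F ξ) := by
  rw [ContinuousLinearEquiv.eq_symm_apply]
  ext φ
  rw [doubleDualEquiv_apply, hd F ξ φ]

theorem hasFDerivAt (hd : IsDualGradient d) (hG : ContDiffAt 𝕜 2 G ξ) :
    HasFDerivAt (d G)
      (((doubleDualEquiv 𝕜 E).symm : _ →L[𝕜] E).comp (fderiv 𝕜 (fderiv 𝕜 G) ξ)) ξ := by
  rw [show d G = fun η => (doubleDualEquiv 𝕜 E).symm (fderiv 𝕜 G η) from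
    funext (hd.eq_doubleDualEquiv_symm G)]
  have h := ((hG.fderiv_right (m := 1) le_rfl).differentiableAt one_ne_zero).hasFDerivAt
  exact (doubleDualEquiv 𝕜 E).symm.hasFDerivAt.comp ξ h

theorem fderiv_liePoissonBracket_apply (hd : IsDualGradient d) (B : E →L[𝕜] E →L[𝕜] E)
    (hG : ContDiffAt 𝕜 2 G ξ) (hH : ContDiffAt 𝕜 2 H ξ) (φ : StrongDual 𝕜 E) :
    fderiv 𝕜 (liePoissonBracket B d G H) ξ φ =
      φ (B (d G ξ) (d H ξ)) + fderiv 𝕜 (fderiv 𝕜 G) ξ φ (ξ.comp (B.flip (d H ξ)))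
        + fderiv 𝕜 (fderiv 𝕜 H) ξ φ (ξ.comp (B (d G ξ))) := by
  have hB := (B.hasFDerivAt.comp ξ (hd.hasFDerivAt hG)).clm_apply (hd.hasFDerivAt hH)
  have h : HasFDerivAt (liePoissonBracket B d G H) _ ξ := (hasFDerivAt_id ξ).clm_apply hB
  rw [h.fderiv, ← apply_doubleDualEquiv_symm_apply (fderiv 𝕜 (fderiv 𝕜 G) ξ φ),
    ← apply_doubleDualEquiv_symm_apply (fderiv 𝕜 (fderiv 𝕜 H) ξ φ)]
  simp only [id_eq, Function.comp_apply, add_apply, ContinuousLinearMap.comp_apply,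
    ContinuousLinearEquiv.coe_coe, ContinuousLinearMap.flip_apply, ContinuousLinearMap.id_apply,
    map_add]
  ring

theorem liePoissonBracket_liePoissonBracket (hd : IsDualGradient d) {B : E →L[𝕜] E →L[𝕜] E}
    (hB : ∀ x y, B x y = -B y x) (hG : ContDiffAt 𝕜 2 G ξ) (hH : ContDiffAt 𝕜 2 H ξ) :
    liePoissonBracket B d F (liePoissonBracket B d G H) ξ =
      ξ (B (d F ξ) (B (d G ξ) (d H ξ)))
        - fderiv 𝕜 (fderiv 𝕜 G) ξ (ξ.comp (B (d F ξ))) (ξ.comp (B (d H ξ)))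
        + fderiv 𝕜 (fderiv 𝕜 H) ξ (ξ.comp (B (d F ξ))) (ξ.comp (B (d G ξ))) := by
  have hflip : ξ.comp (B.flip (d H ξ)) = -ξ.comp (B (d H ξ)) := by
    ext x
    simp [hB x]
  rw [liePoissonBracket, ← ξ.comp_apply (B (d F ξ)), ← hd,
    hd.fderiv_liePoissonBracket_apply B hG hH, hflip, map_neg]
  simp only [ContinuousLinearMap.comp_apply]
  ring

theorem liePoissonBracket_jacobi (hd : IsDualGradient d) {B : E →L[𝕜] E →L[𝕜] E}
    (hB : ∀ x y, B x y = -B y x) (hjac : ∀ x y z, B x (B y z) + B y (B z x) + B z (B x y) = 0)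
    (hF : ContDiffAt 𝕜 2 F ξ) (hG : ContDiffAt 𝕜 2 G ξ) (hH : ContDiffAt 𝕜 2 H ξ) :
    liePoissonBracket B d F (liePoissonBracket B d G H) ξ
      + liePoissonBracket B d G (liePoissonBracket B d H F) ξ
      + liePoissonBracket B d H (liePoissonBracket B d F G) ξ = 0 := by
  have hsymm {K : StrongDual 𝕜 E → 𝕜} (hK : ContDiffAt 𝕜 2 K ξ) (φ ψ : StrongDual 𝕜 E) :
      fderiv 𝕜 (fderiv 𝕜 K) ξ φ ψ = fderiv 𝕜 (fderiv 𝕜 K) ξ ψ φ :=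
    hK.isSymmSndFDerivAt (by simp) φ ψ
  rw [hd.liePoissonBracket_liePoissonBracket hB hG hH,
    hd.liePoissonBracket_liePoissonBracket hB hH hF,
    hd.liePoissonBracket_liePoissonBracket hB hF hG, hsymm hF (ξ.comp (B (d G ξ))),
    hsymm hG (ξ.comp (B (d H ξ))), hsymm hH (ξ.comp (B (d F ξ)))]
  have hjacξ : ξ (B (d F ξ) (B (d G ξ) (d H ξ))) + ξ (B (d G ξ) (B (d H ξ) (d F ξ)))
      + ξ (B (d H ξ) (B (d F ξ) (d G ξ))) = 0 := by
    rw [← map_add, ← map_add, hjac, map_zero]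
  linear_combination hjacξ

end IsDualGradient

end LiePoisson

/-- Let `𝔤` be a finite-dimensional real Lie algebra (given here by a
bilinear bracket `lie` that is antisymmetric and satisfies the Jacobi identity, on a
finite-dimensional normed space so that Fréchet derivatives make sense), and let `𝔤*` be
its (continuous) dual.  For `F : 𝔤* → ℝ` let `d F ξ ∈ 𝔤` be the element corresponding to
the Fréchet derivative `DF(ξ) ∈ 𝔤**` under the canonical isomorphism `𝔤 ≅ 𝔤**`, i.e.
`DF(ξ)(φ) = φ (d F ξ)` for all `φ ∈ 𝔤*`.  Then the Lie–Poisson bracket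
`{F,G}(ξ) := ⟨ξ, [dF(ξ), dG(ξ)]⟩` on smooth functions on `𝔤*` is ℝ-bilinear,
antisymmetric, satisfies the Jacobi identity, and is a derivation in each argument. -/
theorem lie_poisson_bracket_poisson
    {𝔤 : Type*} [NormedAddCommGroup 𝔤] [NormedSpace ℝ 𝔤] [FiniteDimensional ℝ 𝔤]
    (lie : 𝔤 →ₗ[ℝ] 𝔤 →ₗ[ℝ] 𝔤)
    (hanti : ∀ x y : 𝔤, lie x y = -lie y x)
    (hjac : ∀ x y z : 𝔤, lie x (lie y z) + lie y (lie z x) + lie z (lie x y) = 0)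
    (d : (((𝔤 →L[ℝ] ℝ)) → ℝ) → (𝔤 →L[ℝ] ℝ) → 𝔤)
    (hd : ∀ (F : (𝔤 →L[ℝ] ℝ) → ℝ) (ξ φ : 𝔤 →L[ℝ] ℝ), fderiv ℝ F ξ φ = φ (d F ξ)) :
    (∀ F F' G : (𝔤 →L[ℝ] ℝ) → ℝ,
       ContDiff ℝ (⊤ : ℕ∞) F → ContDiff ℝ (⊤ : ℕ∞) F' → ContDiff ℝ (⊤ : ℕ∞) G →
       ∀ ξ : 𝔤 →L[ℝ] ℝ, ξ (lie (d (fun η => F η + F' η) ξ) (d G ξ))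
           = ξ (lie (d F ξ) (d G ξ)) + ξ (lie (d F' ξ) (d G ξ))) ∧
    (∀ (c : ℝ) (F G : (𝔤 →L[ℝ] ℝ) → ℝ),
       ContDiff ℝ (⊤ : ℕ∞) F → ContDiff ℝ (⊤ : ℕ∞) G →
       ∀ ξ : 𝔤 →L[ℝ] ℝ, ξ (lie (d (fun η => c * F η) ξ) (d G ξ)) = c * ξ (lie (d F ξ) (d G ξ))) ∧
    (∀ F G G' : (𝔤 →L[ℝ] ℝ) → ℝ,
       ContDiff ℝ (⊤ : ℕ∞) F → ContDiff ℝ (⊤ : ℕ∞) G → ContDiff ℝ (⊤ : ℕ∞) G' →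
       ∀ ξ : 𝔤 →L[ℝ] ℝ, ξ (lie (d F ξ) (d (fun η => G η + G' η) ξ))
           = ξ (lie (d F ξ) (d G ξ)) + ξ (lie (d F ξ) (d G' ξ))) ∧
    (∀ (c : ℝ) (F G : (𝔤 →L[ℝ] ℝ) → ℝ),
       ContDiff ℝ (⊤ : ℕ∞) F → ContDiff ℝ (⊤ : ℕ∞) G →
       ∀ ξ : 𝔤 →L[ℝ] ℝ, ξ (lie (d F ξ) (d (fun η => c * G η) ξ)) = c * ξ (lie (d F ξ) (d G ξ))) ∧
    (∀ F G : (𝔤 →L[ℝ] ℝ) → ℝ,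
       ContDiff ℝ (⊤ : ℕ∞) F → ContDiff ℝ (⊤ : ℕ∞) G →
       ∀ ξ : 𝔤 →L[ℝ] ℝ, ξ (lie (d F ξ) (d G ξ)) = -ξ (lie (d G ξ) (d F ξ))) ∧
    (∀ F G H : (𝔤 →L[ℝ] ℝ) → ℝ,
       ContDiff ℝ (⊤ : ℕ∞) F → ContDiff ℝ (⊤ : ℕ∞) G → ContDiff ℝ (⊤ : ℕ∞) H →
       ∀ ξ : 𝔤 →L[ℝ] ℝ, ξ (lie (d F ξ) (d (fun η => η (lie (d G η) (d H η))) ξ))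
           + ξ (lie (d G ξ) (d (fun η => η (lie (d H η) (d F η))) ξ))
           + ξ (lie (d H ξ) (d (fun η => η (lie (d F η) (d G η))) ξ)) = 0) ∧
    (∀ F G H : (𝔤 →L[ℝ] ℝ) → ℝ,
       ContDiff ℝ (⊤ : ℕ∞) F → ContDiff ℝ (⊤ : ℕ∞) G → ContDiff ℝ (⊤ : ℕ∞) H →
       ∀ ξ : 𝔤 →L[ℝ] ℝ, ξ (lie (d F ξ) (d (fun η => G η * H η) ξ))
           = ξ (lie (d F ξ) (d G ξ)) * H ξ + G ξ * ξ (lie (d F ξ) (d H ξ))) := by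
  have hd : IsDualGradient d := hd
  have hC2 {F : (𝔤 →L[ℝ] ℝ) → ℝ} (hF : ContDiff ℝ (⊤ : ℕ∞) F) (ξ : 𝔤 →L[ℝ] ℝ) :
      ContDiffAt ℝ 2 F ξ :=
    (hF.of_le (WithTop.coe_le_coe.mpr le_top)).contDiffAt
  have hdiff {F : (𝔤 →L[ℝ] ℝ) → ℝ} (hF : ContDiff ℝ (⊤ : ℕ∞) F) (ξ : 𝔤 →L[ℝ] ℝ) :
      DifferentiableAt ℝ F ξ :=
    (hC2 hF ξ).differentiableAt two_ne_zero
  refine ⟨fun F F' G hF hF' _ ξ => ?_, fun c F G hF _ ξ => ?_, fun F G G' _ hG hG' ξ => ?_,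
    fun c F G _ hG ξ => ?_, fun F G _ _ ξ => ?_, fun F G H hF hG hH ξ => ?_,
    fun F G H _ hG hH ξ => ?_⟩
  · rw [hd.add (hdiff hF ξ) (hdiff hF' ξ), map_add, LinearMap.add_apply, map_add]
  · rw [hd.const_mul (hdiff hF ξ), map_smul, LinearMap.smul_apply, map_smul, smul_eq_mul]
  · rw [hd.add (hdiff hG ξ) (hdiff hG' ξ), map_add, map_add]
  · rw [hd.const_mul (hdiff hG ξ), map_smul, map_smul, smul_eq_mul]
  · rw [hanti, map_neg]
  · exact hd.liePoissonBracket_jacobi (B := lie.toContinuousBilinearMap) hanti hjac (hC2 hF ξ)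
      (hC2 hG ξ) (hC2 hH ξ)
  · rw [hd.mul (hdiff hG ξ) (hdiff hH ξ)]
    simp only [map_add, map_smul, smul_eq_mul]
    ring
end

section
/- Let P be a Poisson algebra over a field k of characteristic zero and I ⊆ P an ideal of the commutative algebra P with {I, I} ⊆ I. Then the pair (P/I, I/I²) is a Lie–Rinehart algebra: (1) the map ρ(i + I²)(p + I) := {i, p} + I is well-defined (independent of the representatives i and p); (2) for each γ ∈ I/I², ρ(γ) is a k-linear derivation of the commutative algebra P/I; (3) ρ is a homomorphism of Lie algebras from I/I² (with the bracket induced by that of P) to the derivations of P/I; (4) the compatibilities {γ, aσ} = ρ(γ)(a)σ + a{γ, σ} and ρ(aγ) = aρ(γ) hold for all a ∈ P/I and γ, σ ∈ I/I², where P/I acts on I/I² by the module structure induced by multiplication in P. -/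
/-- Let `P` be a Poisson algebra over a field `k` of characteristic
zero and `I ⊆ P` an ideal with `{I, I} ⊆ I`.  Then the pair `(P/I, I/I²)` is a
Lie–Rinehart algebra, with anchor `ρ(i + I²)(p + I) := {i, p} + I`.  Stated on
representatives:
(1) the anchor is well defined;
(2) each `ρ(γ)` is a derivation of `P/I` (the Leibniz rule holds exactly in `P`);
(3) `ρ` is a Lie algebra homomorphism (modulo `I`);
(4) the compatibilities `{γ, aσ} = ρ(γ)(a)σ + a{γ,σ}` (modulo `I²`) and
    `ρ(aγ) = aρ(γ)` (modulo `I`) hold. -/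
theorem conormal_pair_is_lie_rinehart
    {k P : Type*} [Field k] [CharZero k] [CommRing P] [Algebra k P]
    (br : P →ₗ[k] P →ₗ[k] P)
    (hanti : ∀ a b : P, br a b = -br b a)
    (hjac : ∀ a b c : P, br a (br b c) + br b (br c a) + br c (br a b) = 0)
    (hleib : ∀ a b c : P, br a (b * c) = br a b * c + b * br a c)
    (I : Ideal P)
    (hI : ∀ a ∈ I, ∀ b ∈ I, br a b ∈ I) :
    -- (1) `ρ(i + I²)(p + I) := {i,p} + I` is well defined
    (∀ i ∈ I, ∀ i' ∈ I, ∀ p p' : P,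
       i - i' ∈ I ^ 2 → p - p' ∈ I → br i p - br i' p' ∈ I) ∧
    -- (2) each `ρ(γ)` is a derivation of `P/I`
    (∀ i ∈ I, ∀ p q : P,
       br i (p * q) - (br i p * q + p * br i q) ∈ I) ∧
    -- (3) `ρ` is a homomorphism of Lie algebras from `I/I²` to derivations of `P/I`
    (∀ i ∈ I, ∀ j ∈ I, ∀ p : P,
       br (br i j) p - (br i (br j p) - br j (br i p)) ∈ I) ∧
    -- (4a) `{γ, aσ} = ρ(γ)(a)σ + a{γ,σ}` in `I/I²`
    (∀ i ∈ I, ∀ s ∈ I, ∀ a : P,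
       br i (a * s) - (br i a * s + a * br i s) ∈ I ^ 2) ∧
    -- (4b) `ρ(aγ) = aρ(γ)`
    (∀ (a : P), ∀ i ∈ I, ∀ p : P,
       br (a * i) p - a * br i p ∈ I) := by
  have hsq : ∀ x ∈ I ^ 2, ∀ p : P, br x p ∈ I := by
    intro x hx p
    rw [pow_two] at hx
    refine Submodule.mul_induction_on hx (fun m hm n hn => ?_) (fun x y hx hy => ?_)
    · have : br (m * n) p = -(br p m * n + m * br p n) := by
        rw [hanti (m * n) p, hleib]
      rw [this]
      exact neg_mem (add_mem (I.mul_mem_left _ hn) (I.mul_mem_right _ hm))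
    · have : br (x + y) p = br x p + br y p := by
        rw [map_add]; rfl
      rw [this]; exact add_mem hx hy
  refine ⟨?_, ?_, ?_, ?_, ?_⟩
  · intro i hi i' hi' p p' hii' hpp'
    have key : br i p - br i' p' = br (i - i') p + br i' (p - p') := by
      rw [map_sub, LinearMap.sub_apply, map_sub]; ring
    rw [key]
    exact add_mem (hsq _ hii' p) (hI i' hi' _ hpp')
  · intro i _ p q
    rw [hleib, sub_self]; exact zero_mem I
  · intro i _ j _ p
    have h := hjac i j p
    have : br (br i j) p - (br i (br j p) - br j (br i p)) = 0 := by
      have h1 : br j (br p i) = -br j (br i p) := by rw [hanti p i, map_neg]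
      have h2 : br p (br i j) = -br (br i j) p := hanti _ _
      rw [h1, h2] at h; linear_combination -h
    rw [this]; exact zero_mem I
  · intro i _ s _ a
    rw [hleib, sub_self]; exact zero_mem (I ^ 2)
  · intro a i hi p
    have : br (a * i) p - a * br i p = -(br p a) * i := by
      rw [hanti (a * i) p, hleib, hanti i p]; ring
    rw [this]
    exact I.mul_mem_left _ hi
end

section
/- Let 𝔤 be a Lie algebra over a field k of characteristic zero, let [·,·] be the Schouten–Nijenhuis bracket on the exterior algebra ⋀𝔤 (the unique degree −1 bracket extending the Lie bracket of 𝔤, vanishing against scalars, graded antisymmetric, and satisfying the Leibniz rule), and let Δ : ⋀𝔤 → ⋀𝔤 be the Chevalley–Eilenberg boundary operator, determined by Δ(x₁∧⋯∧x_p) = Σ_{i<j} (−1)^{i+j} [x_i, x_j] ∧ x₁∧⋯∧x̂_i∧⋯∧x̂_j∧⋯∧x_p on decomposables and vanishing on ⋀⁰𝔤 ⊕ ⋀¹𝔤. Then Δ is a generator of the Schouten–Nijenhuis bracket: for all a ∈ ⋀^p𝔤 and b ∈ ⋀𝔤, [a, b] = (−1)^p (Δ(a∧b) − Δ(a)∧b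 − (−1)^p a∧Δ(b)). In particular (⋀𝔤, ∧, [·,·], Δ) is a Batalin–Vilkovisky algebra. -/
open scoped BigOperators

/-- The degree-`p` component `⋀^p 𝔤` of the exterior algebra, as a submodule. -/
noncomputable def extGrade (k 𝔤 : Type*) [Field k] [AddCommGroup 𝔤] [Module k 𝔤]
    (p : ℕ) : Submodule k (ExteriorAlgebra k 𝔤) :=
  (LinearMap.range (ExteriorAlgebra.ι k : 𝔤 →ₗ[k] ExteriorAlgebra k 𝔤)) ^ p

/-- The defining axioms of the Schouten–Nijenhuis bracket on `⋀𝔤`. -/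
def IsSchoutenBracket (k 𝔤 : Type*) [Field k] [LieRing 𝔤] [LieAlgebra k 𝔤]
    (B : ExteriorAlgebra k 𝔤 →ₗ[k] ExteriorAlgebra k 𝔤 →ₗ[k] ExteriorAlgebra k 𝔤) :
    Prop :=
  (∀ (p q : ℕ), ∀ a ∈ extGrade k 𝔤 p, ∀ b ∈ extGrade k 𝔤 q,
     B a b ∈ extGrade k 𝔤 (p + q - 1)) ∧
  (∀ x y : 𝔤, B (ExteriorAlgebra.ι k x) (ExteriorAlgebra.ι k y)
     = ExteriorAlgebra.ι k ⁅x, y⁆) ∧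
  (∀ a : ExteriorAlgebra k 𝔤, ∀ c ∈ extGrade k 𝔤 0, B a c = 0) ∧
  (∀ (p q : ℕ), ∀ a ∈ extGrade k 𝔤 p, ∀ b ∈ extGrade k 𝔤 q,
     B a b = -((Int.negOnePow (((p : ℤ) - 1) * ((q : ℤ) - 1)) : ℤ) • B b a)) ∧
  (∀ (p q : ℕ), ∀ a ∈ extGrade k 𝔤 p, ∀ b ∈ extGrade k 𝔤 q, ∀ c : ExteriorAlgebra k 𝔤,
     B a (b * c) = B a b * c
       + (Int.negOnePow (((p : ℤ) - 1) * (q : ℤ)) : ℤ) • (b * B a c))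

/-- The defining properties of the Chevalley–Eilenberg boundary operator on `⋀𝔤`
(`0`-based indices give the same signs as the `1`-based formula). -/
def IsCEOperator (k 𝔤 : Type*) [Field k] [LieRing 𝔤] [LieAlgebra k 𝔤]
    (Δ : ExteriorAlgebra k 𝔤 →ₗ[k] ExteriorAlgebra k 𝔤) : Prop :=
  (∀ (p : ℕ), ∀ a ∈ extGrade k 𝔤 p, Δ a ∈ extGrade k 𝔤 (p - 1)) ∧
  (∀ a ∈ extGrade k 𝔤 0, Δ a = 0) ∧
  (∀ a ∈ extGrade k 𝔤 1, Δ a = 0) ∧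
  (∀ (p : ℕ) (x : Fin p → 𝔤),
     Δ (List.ofFn fun i => ExteriorAlgebra.ι k (x i)).prod
       = ∑ i : Fin p, ∑ j : Fin p,
           if (i : ℕ) < (j : ℕ) then
             ((-1 : ℤ) ^ ((i : ℕ) + (j : ℕ))) •
               (ExteriorAlgebra.ι k ⁅x i, x j⁆ *
                 (((List.ofFn fun l => ExteriorAlgebra.ι k (x l)).eraseIdx
                     (j : ℕ)).eraseIdx (i : ℕ)).prod)
           else 0)

namespace CEAux


variable {k 𝔤 : Type*} [Field k] [AddCommGroup 𝔤] [Module k 𝔤]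

open ExteriorAlgebra

/-- product of `ι`'s of the `w i`. -/
noncomputable def Pw {p : ℕ} (w : Fin p → 𝔤) : ExteriorAlgebra k 𝔤 :=
  (List.ofFn fun i => ExteriorAlgebra.ι k (w i)).prod

lemma Pw_zero (w : Fin 0 → 𝔤) : Pw (k := k) w = 1 := by simp [Pw]

lemma Pw_succ {p : ℕ} (w : Fin (p+1) → 𝔤) :
    Pw (k := k) w = ExteriorAlgebra.ι k (w 0) * Pw (w ∘ Fin.succ) := by
  rw [Pw, List.ofFn_succ, List.prod_cons]; rfl

lemma Pw_cons {p : ℕ} (x : 𝔤) (w : Fin p → 𝔤) :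
    ExteriorAlgebra.ι k x * Pw (k := k) w = Pw (Fin.cons x w) := by
  rw [Pw_succ]
  simp [Fin.cons_zero, Fin.cons_succ, Function.comp_def]

lemma one_mem_grade0 : (1 : ExteriorAlgebra k 𝔤) ∈ extGrade k 𝔤 0 := by
  rw [extGrade, pow_zero, Submodule.one_eq_range]
  exact ⟨1, map_one (algebraMap k (ExteriorAlgebra k 𝔤))⟩

lemma algebraMap_mem_grade0 (r : k) :
    (algebraMap k (ExteriorAlgebra k 𝔤) r) ∈ extGrade k 𝔤 0 := by
  rw [extGrade, pow_zero, Submodule.one_eq_range]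
  exact ⟨r, rfl⟩

lemma ι_mem_grade1 (x : 𝔤) : ExteriorAlgebra.ι k x ∈ extGrade k 𝔤 1 := by
  rw [extGrade, pow_one]
  exact ⟨x, rfl⟩

lemma Pw_mem {p : ℕ} (w : Fin p → 𝔤) : Pw (k := k) w ∈ extGrade k 𝔤 p := by
  induction p with
  | zero => rw [Pw_zero]; exact one_mem_grade0
  | succ n ih =>
    rw [Pw_succ, extGrade, pow_succ']
    exact Submodule.mul_mem_mul ⟨w 0, rfl⟩ (ih _)

lemma swap3 (u v : 𝔤) (m : ExteriorAlgebra k 𝔤) :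
    ExteriorAlgebra.ι k u * (ExteriorAlgebra.ι k v * m)
      = -(ExteriorAlgebra.ι k v * (ExteriorAlgebra.ι k u * m)) := by
  rw [← mul_assoc, ← mul_assoc]
  have h := ExteriorAlgebra.ι_add_mul_swap (R := k) u v
  rw [eq_neg_of_add_eq_zero_left h, neg_mul]


/-- The set of `ι`-monomials. -/
def PwSet (k 𝔤 : Type*) [Field k] [AddCommGroup 𝔤] [Module k 𝔤] :
    Set (ExteriorAlgebra k 𝔤) :=
  {u | ∃ (p : ℕ) (w : Fin p → 𝔤), u = Pw w}

lemma ι_mul_mem_span {a : ExteriorAlgebra k 𝔤}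
    (ha : a ∈ Submodule.span k (PwSet k 𝔤)) (x : 𝔤) :
    ExteriorAlgebra.ι k x * a ∈ Submodule.span k (PwSet k 𝔤) := by
  induction ha using Submodule.span_induction with
  | mem u hu =>
    obtain ⟨p, w, rfl⟩ := hu
    rw [Pw_cons]
    exact Submodule.subset_span ⟨p+1, _, rfl⟩
  | zero => rw [mul_zero]; exact Submodule.zero_mem _
  | add u v _ _ hu hv => rw [mul_add]; exact Submodule.add_mem _ hu hv
  | smul r u _ hu => rw [mul_smul_comm]; exact Submodule.smul_mem _ r hu

lemma Pw_mul_mem_span {p : ℕ} (w : Fin p → 𝔤) {a : ExteriorAlgebra k 𝔤}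
    (ha : a ∈ Submodule.span k (PwSet k 𝔤)) :
    Pw w * a ∈ Submodule.span k (PwSet k 𝔤) := by
  induction p with
  | zero => rw [Pw_zero, one_mul]; exact ha
  | succ n ih =>
    rw [Pw_succ, mul_assoc]
    exact ι_mul_mem_span (ih _) _

lemma mem_span_Pw (a : ExteriorAlgebra k 𝔤) : a ∈ Submodule.span k (PwSet k 𝔤) := by
  induction a using ExteriorAlgebra.induction with
  | algebraMap r =>
    rw [Algebra.algebraMap_eq_smul_one]
    refine Submodule.smul_mem _ r (Submodule.subset_span ⟨0, Fin.elim0, ?_⟩)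
    rw [Pw_zero]
  | ι x =>
    have : ExteriorAlgebra.ι k x = Pw (fun _ : Fin 1 => x) := by
      rw [Pw_succ, Pw_zero, mul_one]
    rw [this]
    exact Submodule.subset_span ⟨1, _, rfl⟩
  | mul a b ha hb =>
    induction ha using Submodule.span_induction with
    | mem u hu =>
      obtain ⟨p, w, rfl⟩ := hu
      exact Pw_mul_mem_span w hb
    | zero => rw [zero_mul]; exact Submodule.zero_mem _
    | add u v _ _ hu hv => rw [add_mul]; exact Submodule.add_mem _ hu hv
    | smul r u _ hu => rw [smul_mul_assoc]; exact Submodule.smul_mem _ r hu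
  | add a b ha hb => exact Submodule.add_mem _ ha hb


/-- Master induction principle: any additive/`k`-linear predicate holding on all
`ι`-monomials holds everywhere. -/
lemma ext_ind {C : ExteriorAlgebra k 𝔤 → Prop}
    (h0 : C 0) (hadd : ∀ a b, C a → C b → C (a + b))
    (hsmul : ∀ (r : k) a, C a → C (r • a))
    (hP : ∀ (p : ℕ) (w : Fin p → 𝔤), C (Pw w)) (a : ExteriorAlgebra k 𝔤) : C a := by
  have := mem_span_Pw a
  induction this using Submodule.span_induction with
  | mem u hu => obtain ⟨p, w, rfl⟩ := hu; exact hP p w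
  | zero => exact h0
  | add u v _ _ hu hv => exact hadd u v hu hv
  | smul r u _ hu => exact hsmul r u hu


section Lie

variable {k 𝔤 : Type*} [Field k] [LieRing 𝔤] [LieAlgebra k 𝔤]
variable {B : ExteriorAlgebra k 𝔤 →ₗ[k] ExteriorAlgebra k 𝔤 →ₗ[k] ExteriorAlgebra k 𝔤}
variable {Δ : ExteriorAlgebra k 𝔤 →ₗ[k] ExteriorAlgebra k 𝔤}

local notation "ι" => ExteriorAlgebra.ι k

lemma B_one (hB : IsSchoutenBracket k 𝔤 B) (a : ExteriorAlgebra k 𝔤) : B a 1 = 0 :=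
  hB.2.2.1 a 1 one_mem_grade0

lemma B_leib1 (hB : IsSchoutenBracket k 𝔤 B) (x : 𝔤) (b c : ExteriorAlgebra k 𝔤) :
    B (ι x) (b * c) = B (ι x) b * c + b * B (ι x) c := by
  induction b using ext_ind with
  | h0 => simp
  | hadd u v hu hv => simp only [map_add, add_mul]; rw [hu, hv]; abel
  | hsmul r u hu => simp only [map_smul, smul_mul_assoc]; rw [hu]; simp [mul_smul_comm, smul_add]
  | hP p w =>
    have h := hB.2.2.2.2 1 p (ι x) (ι_mem_grade1 x) (Pw w) (Pw_mem w) c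
    simpa using h

lemma B_anti1 (hB : IsSchoutenBracket k 𝔤 B) (a : ExteriorAlgebra k 𝔤) (y : 𝔤) :
    B a (ι y) = -(B (ι y) a) := by
  induction a using ext_ind with
  | h0 => simp
  | hadd u v hu hv => simp only [map_add, LinearMap.add_apply]; rw [hu, hv]; abel
  | hsmul r u hu => simp only [map_smul, LinearMap.smul_apply]; rw [hu]; simp
  | hP p w =>
    have h := hB.2.2.2.1 p 1 (Pw w) (Pw_mem w) (ι y) (ι_mem_grade1 y)
    simpa using h

lemma B_scalar_left (hB : IsSchoutenBracket k 𝔤 B) (r : k) (b : ExteriorAlgebra k 𝔤) :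
    B (algebraMap k (ExteriorAlgebra k 𝔤) r) b = 0 := by
  induction b using ext_ind with
  | h0 => simp
  | hadd u v hu hv => rw [map_add, hu, hv, add_zero]
  | hsmul s u hu => rw [map_smul, hu, smul_zero]
  | hP p w =>
    have h := hB.2.2.2.1 0 p _ (algebraMap_mem_grade0 (k := k) (𝔤 := 𝔤) r) (Pw w) (Pw_mem w)
    rw [h, hB.2.2.1 (Pw w) _ (algebraMap_mem_grade0 r), smul_zero, neg_zero]

lemma SC (p : ℕ) (a : ExteriorAlgebra k 𝔤) (ha : a ∈ extGrade k 𝔤 p) (y : 𝔤) :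
    a * ι y = ((-1 : ℤ)^p) • (ι y * a) := by
  rw [extGrade] at ha
  induction ha using Submodule.pow_induction_on_left' with
  | algebraMap r => rw [pow_zero, one_smul, Algebra.commutes]
  | add u v i hu hv ihu ihv => rw [add_mul, mul_add, smul_add, ihu, ihv]
  | mem_mul m hm i x hx ih =>
    obtain ⟨v, rfl⟩ := hm
    calc ExteriorAlgebra.ι k v * x * ι y = ExteriorAlgebra.ι k v * (x * ι y) := mul_assoc _ _ _
    _ = ExteriorAlgebra.ι k v * ((-1 : ℤ)^i • (ι y * x)) := by rw [ih]
    _ = (-1 : ℤ)^i • (ExteriorAlgebra.ι k v * (ι y * x)) := (mul_smul_comm _ _ _)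
    _ = (-1 : ℤ)^i • (-(ι y * (ExteriorAlgebra.ι k v * x))) := by rw [swap3]
    _ = ((-1 : ℤ)^(i+1)) • (ι y * (ExteriorAlgebra.ι k v * x)) := by
        rw [pow_succ, mul_smul, neg_one_zsmul]


lemma swap_smul (j : ℕ) (u v : 𝔤) (m : ExteriorAlgebra k 𝔤) :
    ((-1:ℤ)^(j+1)) • (ι u * (ι v * m)) = ι v * (((-1:ℤ)^j) • (ι u * m)) := by
  rw [swap3, mul_smul_comm]
  have h : ((-1:ℤ)^(j+1)) = -((-1:ℤ)^j) := by ring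
  rw [h, neg_smul, smul_neg, neg_neg]

lemma Bform (hB : IsSchoutenBracket k 𝔤 B) (p : ℕ) (w : Fin p → 𝔤) (x : 𝔤) :
    B (ι x) (Pw w) = ∑ j : Fin p, ((-1:ℤ)^(j:ℕ)) •
      (ι ⁅x, w j⁆ * ((List.ofFn fun i => ι (w i)).eraseIdx (j:ℕ)).prod) := by
  induction p with
  | zero => rw [Pw_zero, B_one hB]; simp
  | succ n ih =>
    rw [Pw_succ, B_leib1 hB, hB.2.1, ih (w ∘ Fin.succ), Fin.sum_univ_succ]
    congr 1
    · simp only [Fin.val_zero, pow_zero, one_smul, List.ofFn_succ, List.eraseIdx_cons_zero]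
      rw [Pw]
      simp [Function.comp_def]
    · rw [Finset.mul_sum]
      refine Finset.sum_congr rfl fun j _ => ?_
      simp only [Function.comp_apply, Fin.val_succ, List.ofFn_succ,
        List.eraseIdx_cons_succ, List.prod_cons]
      rw [swap_smul]


lemma Delta_cons (hB : IsSchoutenBracket k 𝔤 B) (hΔ : IsCEOperator k 𝔤 Δ)
    (p : ℕ) (w : Fin (p+1) → 𝔤) :
    Δ (Pw w) = -(ι (w 0) * Δ (Pw (w ∘ Fin.succ))) - B (ι (w 0)) (Pw (w ∘ Fin.succ)) := by
  rw [Pw, Pw, hΔ.2.2.2 (p+1) w, hΔ.2.2.2 p (w ∘ Fin.succ),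
    ← Pw, Bform hB p (w ∘ Fin.succ) (w 0), Fin.sum_univ_succ]
  simp only [Function.comp_apply]
  have h1 : (∑ j : Fin (p+1),
      if ((0 : Fin (p+1)) : ℕ) < (j : ℕ) then
        ((-1 : ℤ) ^ (((0 : Fin (p+1)) : ℕ) + (j : ℕ))) •
          (ι ⁅w 0, w j⁆ *
            (((List.ofFn fun l => ι (w l)).eraseIdx (j : ℕ)).eraseIdx
              ((0 : Fin (p+1)) : ℕ)).prod)
      else 0)
      = -(∑ j : Fin p, ((-1:ℤ)^(j:ℕ)) •
          (ι ⁅w 0, w (Fin.succ j)⁆ *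
            ((List.ofFn fun i => ι (w (Fin.succ i))).eraseIdx (j:ℕ)).prod)) := by
    rw [Fin.sum_univ_succ, ← Finset.sum_neg_distrib]
    simp only [Fin.val_zero, lt_irrefl, if_false, zero_add]
    refine Finset.sum_congr rfl fun j _ => ?_
    simp only [Fin.val_succ, Nat.succ_pos, if_true, List.ofFn_succ,
      List.eraseIdx_cons_succ, List.eraseIdx_cons_zero, Nat.zero_add]
    have hs : ((-1:ℤ)^((j:ℕ)+1)) = -((-1:ℤ)^(j:ℕ)) := by ring
    rw [hs, neg_smul]
  have h2 : (∑ i : Fin p, ∑ j : Fin (p+1),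
      if ((Fin.succ i : Fin (p+1)) : ℕ) < (j : ℕ) then
        ((-1 : ℤ) ^ (((Fin.succ i : Fin (p+1)) : ℕ) + (j : ℕ))) •
          (ι ⁅w (Fin.succ i), w j⁆ *
            (((List.ofFn fun l => ι (w l)).eraseIdx (j : ℕ)).eraseIdx
              ((Fin.succ i : Fin (p+1)) : ℕ)).prod)
      else 0)
      = -(ι (w 0) * ∑ i : Fin p, ∑ j : Fin p,
          if (i : ℕ) < (j : ℕ) then
            ((-1 : ℤ) ^ ((i : ℕ) + (j : ℕ))) •
              (ι ⁅w (Fin.succ i), w (Fin.succ j)⁆ *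
                (((List.ofFn fun l => ι (w (Fin.succ l))).eraseIdx
                  (j : ℕ)).eraseIdx (i : ℕ)).prod)
          else 0) := by
    rw [Finset.mul_sum, ← Finset.sum_neg_distrib]
    refine Finset.sum_congr rfl fun i _ => ?_
    rw [Fin.sum_univ_succ, Finset.mul_sum, ← Finset.sum_neg_distrib]
    simp only [Fin.val_zero, Fin.val_succ, Nat.not_lt_zero, if_false, zero_add]
    refine Finset.sum_congr rfl fun j _ => ?_
    by_cases h : (i : ℕ) < (j : ℕ)
    · rw [if_pos (by omega : (i:ℕ)+1 < (j:ℕ)+1), if_pos h]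
      simp only [List.ofFn_succ, List.eraseIdx_cons_succ, List.eraseIdx_cons_zero,
        List.prod_cons]
      have he : (i:ℕ)+1+((j:ℕ)+1) = ((i:ℕ)+(j:ℕ)+1)+1 := by ring
      rw [he, swap_smul]
      have hs : ((-1:ℤ)^((i:ℕ)+(j:ℕ)+1)) = -((-1:ℤ)^((i:ℕ)+(j:ℕ))) := by ring
      rw [hs, neg_smul, mul_neg]
    · rw [if_neg (by omega : ¬ ((i:ℕ)+1 < (j:ℕ)+1)), if_neg h, mul_zero, neg_zero]
  rw [h1, h2]
  abel


lemma G1 (hB : IsSchoutenBracket k 𝔤 B) (hΔ : IsCEOperator k 𝔤 Δ)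
    (x : 𝔤) (b : ExteriorAlgebra k 𝔤) :
    Δ (ι x * b) = -(ι x * Δ b) - B (ι x) b := by
  induction b using ext_ind with
  | h0 => simp
  | hadd u v hu hv =>
    simp only [mul_add, map_add]
    rw [hu, hv]; abel
  | hsmul r u hu =>
    simp only [mul_smul_comm, map_smul]
    rw [hu]
    simp only [smul_sub, smul_neg, mul_smul_comm]
  | hP p w =>
    rw [Pw_cons, Delta_cons hB hΔ p (Fin.cons x w)]
    have hc : (Fin.cons x w ∘ Fin.succ) = w := by funext i; simp
    rw [hc, Fin.cons_zero]

lemma Jac (hB : IsSchoutenBracket k 𝔤 B) (x y : 𝔤) (m : ExteriorAlgebra k 𝔤) :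
    B (ι x) (B (ι y) m) - B (ι y) (B (ι x) m) = B (ι ⁅x, y⁆) m := by
  induction m using ext_ind with
  | h0 => simp
  | hadd u v hu hv => simp only [map_add]; rw [← hu, ← hv]; abel
  | hsmul r u hu => simp only [map_smul]; rw [← hu]; simp [smul_sub]
  | hP p w =>
    induction p with
    | zero => rw [Pw_zero]; simp [B_one hB]
    | succ n ih =>
      rw [Pw_succ]
      simp only [B_leib1 hB, hB.2.1, map_add]
      rw [← ih (w ∘ Fin.succ)]
      have hl : (⁅⁅x, y⁆, w 0⁆ : 𝔤) = ⁅x, ⁅y, w 0⁆⁆ - ⁅y, ⁅x, w 0⁆⁆ := lie_lie x y (w 0)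
      rw [hl, map_sub, sub_mul, mul_sub]
      abel

lemma DB (hB : IsSchoutenBracket k 𝔤 B) (hΔ : IsCEOperator k 𝔤 Δ)
    (x : 𝔤) (m : ExteriorAlgebra k 𝔤) :
    Δ (B (ι x) m) = B (ι x) (Δ m) := by
  induction m using ext_ind with
  | h0 => simp
  | hadd u v hu hv => simp only [map_add]; rw [hu, hv]
  | hsmul r u hu => simp only [map_smul]; rw [hu]
  | hP p w =>
    induction p with
    | zero =>
      rw [Pw_zero, B_one hB, hΔ.2.1 1 one_mem_grade0]
      simp
    | succ n ih =>
      rw [Pw_succ, B_leib1 hB, hB.2.1, map_add, G1 hB hΔ, G1 hB hΔ, ih (w ∘ Fin.succ),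
        G1 hB hΔ]
      simp only [map_sub, map_neg, mul_sub, mul_neg]
      rw [B_leib1 hB, hB.2.1, ← Jac hB x (w 0) (Pw (w ∘ Fin.succ))]
      abel

lemma DD (hB : IsSchoutenBracket k 𝔤 B) (hΔ : IsCEOperator k 𝔤 Δ)
    (m : ExteriorAlgebra k 𝔤) : Δ (Δ m) = 0 := by
  induction m using ext_ind with
  | h0 => simp
  | hadd u v hu hv => simp only [map_add]; rw [hu, hv, add_zero]
  | hsmul r u hu => simp only [map_smul]; rw [hu, smul_zero]
  | hP p w =>
    induction p with
    | zero => rw [Pw_zero, hΔ.2.1 1 one_mem_grade0, map_zero]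
    | succ n ih =>
      rw [Pw_succ, G1 hB hΔ, map_sub, map_neg, G1 hB hΔ, DB hB hΔ, ih (w ∘ Fin.succ)]
      simp


lemma gen_formula (hB : IsSchoutenBracket k 𝔤 B) (hΔ : IsCEOperator k 𝔤 Δ)
    (p : ℕ) (a : ExteriorAlgebra k 𝔤) (ha : a ∈ extGrade k 𝔤 p)
    (b : ExteriorAlgebra k 𝔤) :
    B a b = ((-1 : ℤ) ^ p) •
      (Δ (a * b) - Δ a * b - ((-1 : ℤ) ^ p) • (a * Δ b)) := by
  cases p with
  | zero =>
    rw [extGrade, pow_zero, Submodule.one_eq_range] at ha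
    obtain ⟨r, rfl⟩ := ha
    simp only [Algebra.linearMap_apply]
    rw [B_scalar_left hB, hΔ.2.1 _ (algebraMap_mem_grade0 r)]
    rw [← Algebra.smul_def r b, ← Algebra.smul_def r (Δ b), map_smul]
    simp
  | succ n =>
    have hΔa : Δ a ∈ extGrade k 𝔤 n := by
      have h := hΔ.1 (n+1) a ha; simpa using h
    induction b using ext_ind with
    | h0 => simp
    | hadd u v hu hv =>
      rw [map_add, hu, hv]
      simp only [map_add, mul_add, smul_add, smul_sub]
      abel
    | hsmul r u hu =>
      rw [map_smul, hu]
      simp only [map_smul, mul_smul_comm, smul_sub]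
      simp only [smul_comm (α := ExteriorAlgebra k 𝔤) r ((-1:ℤ)^(n+1))]
    | hP q w =>
      induction q with
      | zero =>
        rw [Pw_zero, mul_one, B_one hB, hΔ.2.1 1 one_mem_grade0, mul_zero]
        simp
      | succ m ih =>
        rw [Pw_succ]
        set y := w 0
        set b' : ExteriorAlgebra k 𝔤 := Pw (w ∘ Fin.succ) with hb'
        have hss : ((-1:ℤ)^(n+1)) * ((-1:ℤ)^(n+1)) = 1 := by
          rw [← pow_add]; exact Even.neg_one_pow ⟨n+1, by ring⟩
        have hL := hB.2.2.2.2 (n+1) 1 a ha (ι y) (ι_mem_grade1 y) b'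
        have hc : ((((n+1:ℕ)):ℤ) - 1) * (((1:ℕ)):ℤ) = ((n:ℕ):ℤ) := by push_cast; ring
        rw [hc, Int.coe_negOnePow_natCast] at hL
        have hba : B (ι y) a = -(B a (ι y)) := by rw [B_anti1 hB a y, neg_neg]
        have hab : Δ (a * b') = ((-1:ℤ)^(n+1)) • B a b' + Δ a * b'
            + ((-1:ℤ)^(n+1)) • (a * Δ b') := by
          rw [ih (w ∘ Fin.succ), ← hb', smul_smul, hss, one_smul]
          abel
        have e1 : a * (ι y * b') = ((-1:ℤ)^(n+1)) • (ι y * (a * b')) := by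
          rw [← mul_assoc, SC (n+1) a ha y, smul_mul_assoc, mul_assoc]
        have e2 : Δ (a * (ι y * b')) = ((-1:ℤ)^(n+1)) •
            (-(ι y * Δ (a * b')) - B (ι y) (a * b')) := by
          rw [e1, map_zsmul, G1 hB hΔ]
        have e3 : Δ a * (ι y * b') = ((-1:ℤ)^n) • (ι y * (Δ a * b')) := by
          rw [← mul_assoc, SC n (Δ a) hΔa y, smul_mul_assoc, mul_assoc]
        have e4 : a * Δ (ι y * b') = -(((-1:ℤ)^(n+1)) • (ι y * (a * Δ b')))
            - a * B (ι y) b' := by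
          rw [G1 hB hΔ, mul_sub, mul_neg, ← mul_assoc, SC (n+1) a ha y,
            smul_mul_assoc, mul_assoc]
        have e5 : B (ι y) (a * b') = -(B a (ι y)) * b' + a * B (ι y) b' := by
          rw [B_leib1 hB, hba]
        rw [hL, e2, hab, e5, e3, e4]
        rcases Nat.even_or_odd n with h | h
        · have ht : ((-1:ℤ)^n) = 1 := h.neg_one_pow
          have hs : ((-1:ℤ)^(n+1)) = -1 := by rw [pow_succ, ht]; norm_num
          rw [ht, hs]
          simp only [one_smul, neg_smul, neg_neg, smul_neg, mul_add, mul_neg,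
            neg_mul, mul_smul_comm, mul_sub]
          abel
        · have ht : ((-1:ℤ)^n) = -1 := h.neg_one_pow
          have hs : ((-1:ℤ)^(n+1)) = 1 := by rw [pow_succ, ht]; norm_num
          rw [ht, hs]
          simp only [one_smul, neg_smul, neg_neg, smul_neg, mul_add, mul_neg,
            neg_mul, mul_smul_comm, mul_sub]
          abel

end Lie

end CEAux

/-- Let `𝔤` be a Lie algebra over a field `k` of characteristic zero,
let `B` be the Schouten–Nijenhuis bracket on `⋀𝔤` and `Δ` the Chevalley–Eilenberg
boundary operator.  Then `Δ` is a generator of the bracket: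
`[a,b] = (−1)^p (Δ(a∧b) − Δ(a)∧b − (−1)^p a∧Δ(b))` for `a ∈ ⋀^p𝔤`, `b ∈ ⋀𝔤`;
together with `Δ ∘ Δ = 0`, this makes `(⋀𝔤, ∧, [·,·], Δ)` a Batalin–Vilkovisky
algebra. -/
theorem ce_operator_generates_schouten_bracket
    (k 𝔤 : Type*) [Field k] [CharZero k] [LieRing 𝔤] [LieAlgebra k 𝔤]
    (B : ExteriorAlgebra k 𝔤 →ₗ[k] ExteriorAlgebra k 𝔤 →ₗ[k] ExteriorAlgebra k 𝔤)
    (hB : IsSchoutenBracket k 𝔤 B)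
    (Δ : ExteriorAlgebra k 𝔤 →ₗ[k] ExteriorAlgebra k 𝔤)
    (hΔ : IsCEOperator k 𝔤 Δ) :
    (∀ (p : ℕ), ∀ a ∈ extGrade k 𝔤 p, ∀ b : ExteriorAlgebra k 𝔤,
       B a b = ((-1 : ℤ) ^ p) •
         (Δ (a * b) - Δ a * b - ((-1 : ℤ) ^ p) • (a * Δ b))) ∧
    Δ ∘ₗ Δ = 0 := by
  constructor
  · exact fun p a ha b => CEAux.gen_formula hB hΔ p a ha b
  · apply LinearMap.ext
    intro m
    simpa using CEAux.DD hB hΔ m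
end

section
/- Let A be a vector space over a field k. For multilinear maps f : A^p → A and g : A^q → A (p, q ≥ 1), define f∘g : A^{p+q−1} → A by (f∘g)(a₁, …, a_{p+q−1}) = Σ_{i=1}^{p} (−1)^{(i−1)(q−1)} f(a₁, …, a_{i−1}, g(a_i, …, a_{i+q−1}), a_{i+q}, …, a_{p+q−1}), and define the Gerstenhaber bracket [f, g] := f∘g − (−1)^{(p−1)(q−1)} g∘f. Then [·,·] satisfies graded antisymmetry [f, g] = −(−1)^{(p−1)(q−1)}[g, f], and the graded Jacobi identity [f, [g, h]] = [[f, g], h] + (−1)^{(p−1)(q−1)}[g, [f, h]] for all multilinear maps f : A^p → A, g : A^q → A, h : A^r → A. That is, the space ⊕_{n≥1} Hom(A^{⊗n}, A), with a p-multilinear map given degree p−1, is a graded Lie algebra under the Gerstenhaber bracket. -/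
/-!
The circle product is graded pre-Lie. Expanding `(f ∘ g) ∘ h`, the copy of `h` lands either
inside the copy of `g`, which gives `f ∘ (g ∘ h)`, or in a slot of `f` disjoint from `g`, which
gives the braces `f{h, g}` and `± f{g, h}`. Hence the associator `(f ∘ g) ∘ h - f ∘ (g ∘ h)` is
graded symmetric in `g` and `h`, and expanding the three brackets with the (bi)additivity of `∘`,
the graded Jacobi identity becomes a signed sum of three such symmetries. Antisymmetry is formal,
and the bracket of multilinear maps is multilinear because every summand `f (…, g (…), …)` is.
-/

open Finset Function

lemma neg_one_pow_smul_neg_one_pow_smul {M : Type*} [AddCommGroup M] (n : ℕ) (x : M) :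
    ((-1 : ℤ) ^ n) • ((-1 : ℤ) ^ n) • x = x := by
  rw [smul_smul, ← mul_pow, neg_one_mul, neg_neg, one_pow, one_smul]

/-- We encode a `p`-multilinear map `A^p → A` as a function `(ℕ → A) → A` depending only
on the first `p` entries of the sequence.  `gcomp p q f g` is the Gerstenhaber circle
product `f ∘ g` of a `p`-cochain `f` and a `q`-cochain `g`:
`(f∘g)(a₁,…,a_{p+q−1}) = Σ_{i=1}^p (−1)^{(i−1)(q−1)}
   f(a₁,…,a_{i−1}, g(a_i,…,a_{i+q−1}), a_{i+q},…,a_{p+q−1})`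
(written with `0`-based indices below). -/
def gcomp {A : Type*} [AddCommGroup A] (p q : ℕ) (f g : (ℕ → A) → A) :
    (ℕ → A) → A := fun a =>
  ∑ i ∈ Finset.range p, ((-1 : ℤ) ^ (i * (q - 1))) •
    f (fun l => if l < i then a l else if l = i then g (fun m => a (i + m))
        else a (l + q - 1))

/-- The Gerstenhaber bracket `[f,g] = f∘g − (−1)^{(p−1)(q−1)} g∘f`. -/
def gbracket {A : Type*} [AddCommGroup A] (p q : ℕ) (f g : (ℕ → A) → A) :
    (ℕ → A) → A := fun a =>
  gcomp p q f g a - ((-1 : ℤ) ^ ((p - 1) * (q - 1))) • gcomp q p g f a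

/-- `f : (ℕ → A) → A` encodes a `k`-multilinear map `A^p → A`: it depends only on the
first `p` entries and is additive and `k`-homogeneous in each of them. -/
def IsMultilinearOfArity (k : Type*) {A : Type*} [Field k] [AddCommGroup A] [Module k A]
    (p : ℕ) (f : (ℕ → A) → A) : Prop :=
  (∀ a b : ℕ → A, (∀ l < p, a l = b l) → f a = f b) ∧
  (∀ (a : ℕ → A) (l : ℕ), l < p → ∀ x y : A,
     f (Function.update a l (x + y))
       = f (Function.update a l x) + f (Function.update a l y)) ∧
  (∀ (a : ℕ → A) (l : ℕ), l < p → ∀ (c : k) (x : A),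
     f (Function.update a l (c • x)) = c • f (Function.update a l x))

section Insertion

variable {A : Type*}

def insertAt (i q : ℕ) (g : (ℕ → A) → A) (a : ℕ → A) : ℕ → A := fun l =>
  if l < i then a l else if l = i then g (fun m => a (i + m)) else a (l + q - 1)

def DependsOnFirst (n : ℕ) (f : (ℕ → A) → A) : Prop :=
  ∀ a b : ℕ → A, (∀ l < n, a l = b l) → f a = f b

variable {i q r : ℕ} {g h : (ℕ → A) → A} {a : ℕ → A} {l : ℕ}

lemma insertAt_of_lt (hl : l < i) : insertAt i q g a l = a l := if_pos hl

@[simp]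
lemma insertAt_self : insertAt i q g a i = g (fun m => a (i + m)) := by
  simp [insertAt]

lemma insertAt_of_gt (hl : i < l) : insertAt i q g a l = a (l + q - 1) := by
  simp [insertAt, show ¬l < i by omega, show l ≠ i by omega]

lemma insertAt_eq_update (i q : ℕ) (g : (ℕ → A) → A) (a : ℕ → A) :
    insertAt i q g a = update (fun l => if l < i then a l else a (l + q - 1)) i
      (g (fun m => a (i + m))) := by
  funext l
  rcases lt_trichotomy l i with hl | rfl | hl
  · simp [insertAt_of_lt hl, hl, hl.ne]
  · simp
  · simp [insertAt_of_gt hl, hl.ne', show ¬l < i by omega]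

lemma insertAt_insertAt_of_le_of_lt {j : ℕ} (hj : j < q) (g h : (ℕ → A) → A) (a : ℕ → A) :
    insertAt i q g (insertAt (i + j) r h a)
      = insertAt i (q + r - 1) (fun b => g (insertAt j r h b)) a := by
  funext l
  rcases lt_trichotomy l i with hl | rfl | hl
  · rw [insertAt_of_lt hl, insertAt_of_lt (by omega), insertAt_of_lt hl]
  · simp only [insertAt_self]
    congr 1; funext m
    rcases lt_trichotomy m j with hm | rfl | hm
    · rw [insertAt_of_lt (by omega), insertAt_of_lt hm]
    · simp only [insertAt_self, add_assoc]
    · rw [insertAt_of_gt (by omega), insertAt_of_gt hm]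
      congr 1; omega
  · rw [insertAt_of_gt hl, insertAt_of_gt (by omega), insertAt_of_gt hl]
    congr 1; omega

lemma insertAt_insertAt_of_lt {u : ℕ} (hiu : i < u) (hg : DependsOnFirst (q + 1) g)
    (h : (ℕ → A) → A) (a : ℕ → A) :
    insertAt i (q + 1) g (insertAt (u + q) r h a) = insertAt u r h (insertAt i (q + 1) g a) := by
  funext l
  rcases lt_trichotomy l i with hl | rfl | hl
  · rw [insertAt_of_lt hl, insertAt_of_lt (by omega), insertAt_of_lt (by omega),
      insertAt_of_lt hl]
  · rw [insertAt_self, insertAt_of_lt hiu, insertAt_self]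
    exact hg _ _ fun m hm => insertAt_of_lt (by omega)
  · rcases lt_trichotomy l u with hl' | rfl | hl'
    · rw [insertAt_of_gt hl, insertAt_of_lt (by omega), insertAt_of_lt hl',
        insertAt_of_gt hl]
    · rw [insertAt_of_gt hl, insertAt_self, show l + (q + 1) - 1 = l + q by omega,
        insertAt_self]
      congr 1; funext m
      rw [insertAt_of_gt (by omega)]
      congr 1; omega
    · rw [insertAt_of_gt hl, insertAt_of_gt (by omega), insertAt_of_gt hl',
        insertAt_of_gt (by omega)]
      congr 1; omega

lemma insertAt_update_of_lt (hl : l < i) (z : A) :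
    insertAt i q g (update a l z) = update (insertAt i q g a) l z := by
  funext t
  rcases lt_trichotomy t i with ht | rfl | ht
  · rcases eq_or_ne t l with rfl | htl
    · simp [insertAt_of_lt ht]
    · simp [insertAt_of_lt ht, htl]
  · simp only [insertAt_self, update_of_ne hl.ne']
    congr 1; funext m
    exact update_of_ne (by omega) _ _
  · rw [insertAt_of_gt ht, update_of_ne (by omega), update_of_ne (by omega), insertAt_of_gt ht]

lemma insertAt_update_of_le_of_lt (hil : i ≤ l) (hlq : l < i + q) (z : A) :
    insertAt i q g (update a l z)
      = update (insertAt i q g a) i (g (update (fun m => a (i + m)) (l - i) z)) := by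
  funext t
  rcases lt_trichotomy t i with ht | rfl | ht
  · rw [insertAt_of_lt ht, update_of_ne (by omega), update_of_ne ht.ne, insertAt_of_lt ht]
  · rw [insertAt_self, update_self]
    congr 1; funext m
    rcases eq_or_ne m (l - t) with rfl | hm
    · rw [show t + (l - t) = l by omega, update_self, update_self]
    · rw [update_of_ne (by omega), update_of_ne hm]
  · rw [insertAt_of_gt ht, update_of_ne (by omega), update_of_ne ht.ne', insertAt_of_gt ht]

lemma insertAt_update_of_le (hg : DependsOnFirst q g) (hl : i + q ≤ l) (z : A) :
    insertAt i q g (update a l z) = update (insertAt i q g a) (l - q + 1) z := by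
  funext t
  rcases lt_trichotomy t i with ht | rfl | ht
  · rw [insertAt_of_lt ht, update_of_ne (by omega), update_of_ne (by omega), insertAt_of_lt ht]
  · rw [insertAt_self, update_of_ne (by omega), insertAt_self]
    exact hg _ _ fun m hm => update_of_ne (by omega) _ _
  · rcases eq_or_ne t (l - q + 1) with rfl | htl
    · rw [insertAt_of_gt ht, show l - q + 1 + q - 1 = l by omega, update_self, update_self]
    · rw [insertAt_of_gt ht, update_of_ne (by omega), update_of_ne htl, insertAt_of_gt ht]

end Insertion

section CircleProduct

variable {A : Type*} [AddCommGroup A]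

def SlotAdditive (n : ℕ) (f : (ℕ → A) → A) : Prop :=
  ∀ (a : ℕ → A) (l : ℕ), l < n → ∀ x y : A,
    f (update a l (x + y)) = f (update a l x) + f (update a l y)

lemma gcomp_apply (p q : ℕ) (f g : (ℕ → A) → A) (a : ℕ → A) :
    gcomp p q f g a = ∑ i ∈ range p, ((-1 : ℤ) ^ (i * (q - 1))) • f (insertAt i q g a) :=
  rfl

lemma gcomp_eq_sum (p q : ℕ) (f g : (ℕ → A) → A) :
    gcomp p q f g = ∑ i ∈ range p, ((-1 : ℤ) ^ (i * (q - 1))) • fun a => f (insertAt i q g a) := by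
  funext a
  simp [gcomp_apply, Finset.sum_apply]

lemma gbracket_eq (p q : ℕ) (f g : (ℕ → A) → A) :
    gbracket p q f g = gcomp p q f g - ((-1 : ℤ) ^ ((p - 1) * (q - 1))) • gcomp q p g f :=
  rfl

def gcompLeft (p q : ℕ) (h : (ℕ → A) → A) : ((ℕ → A) → A) →+ ((ℕ → A) → A) :=
  AddMonoidHom.mk' (fun F => gcomp p q F h) fun F F' => by
    funext a
    simp [gcomp_apply, smul_add, sum_add_distrib]

lemma gcomp_sub_left (p q : ℕ) (F F' h : (ℕ → A) → A) :
    gcomp p q (F - F') h = gcomp p q F h - gcomp p q F' h :=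
  map_sub (gcompLeft p q h) F F'

lemma gcomp_zsmul_left (p q : ℕ) (c : ℤ) (F h : (ℕ → A) → A) :
    gcomp p q (c • F) h = c • gcomp p q F h :=
  map_zsmul (gcompLeft p q h) c F

variable {p : ℕ} {f : (ℕ → A) → A}

def SlotAdditive.insertAtHom (hf : SlotAdditive p f) {i : ℕ} (hi : i < p) (n : ℕ)
    (a : ℕ → A) : ((ℕ → A) → A) →+ A :=
  AddMonoidHom.mk' (fun G => f (insertAt i n G a)) fun G G' => by
    simp only [insertAt_eq_update, Pi.add_apply]
    exact hf _ i hi _ _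

lemma SlotAdditive.insertAtHom_apply (hf : SlotAdditive p f) {i : ℕ} (hi : i < p) {n : ℕ}
    {a : ℕ → A} (G : (ℕ → A) → A) : hf.insertAtHom hi n a G = f (insertAt i n G a) :=
  rfl

def gcompRight (hf : SlotAdditive p f) (q : ℕ) : ((ℕ → A) → A) →+ ((ℕ → A) → A) :=
  AddMonoidHom.mk' (fun G => gcomp p q f G) fun G G' => by
    funext a
    simp only [gcomp_apply, Pi.add_apply, ← sum_add_distrib, ← smul_add]
    refine sum_congr rfl fun i hi => ?_
    exact congrArg _ (map_add (hf.insertAtHom (mem_range.mp hi) q a) G G')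

lemma gcomp_sub_right (hf : SlotAdditive p f) (q : ℕ) (G G' : (ℕ → A) → A) :
    gcomp p q f (G - G') = gcomp p q f G - gcomp p q f G' :=
  map_sub (gcompRight hf q) G G'

lemma gcomp_zsmul_right (hf : SlotAdditive p f) (q : ℕ) (c : ℤ) (G : (ℕ → A) → A) :
    gcomp p q f (c • G) = c • gcomp p q f G :=
  map_zsmul (gcompRight hf q) c G

end CircleProduct

section Multilinearity

variable {k A : Type*} [Field k] [AddCommGroup A] [Module k A]

def multilinearCochains (k A : Type*) [Field k] [AddCommGroup A] [Module k A] (n : ℕ) :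
    AddSubgroup ((ℕ → A) → A) where
  carrier := {f | IsMultilinearOfArity k n f}
  add_mem' := fun ⟨hfd, hfa, hfs⟩ ⟨hgd, hga, hgs⟩ =>
    ⟨fun a b hab => by simp only [Pi.add_apply, hfd a b hab, hgd a b hab],
      fun a l hl x y => by simp only [Pi.add_apply, hfa a l hl, hga a l hl]; abel,
      fun a l hl c x => by simp only [Pi.add_apply, hfs a l hl, hgs a l hl, smul_add]⟩
  zero_mem' := ⟨fun _ _ _ => rfl, fun _ _ _ _ _ => (add_zero 0).symm,
    fun _ _ _ c _ => (smul_zero c).symm⟩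
  neg_mem' := fun ⟨hfd, hfa, hfs⟩ =>
    ⟨fun a b hab => by simp only [Pi.neg_apply, hfd a b hab],
      fun a l hl x y => by simp only [Pi.neg_apply, hfa a l hl, neg_add],
      fun a l hl c x => by simp only [Pi.neg_apply, hfs a l hl, smul_neg]⟩

variable {p q : ℕ} {f g : (ℕ → A) → A}

def IsMultilinearOfArity.slotLinearMap (hf : IsMultilinearOfArity k p f) (a : ℕ → A) {l : ℕ}
    (hl : l < p) : A →ₗ[k] A where
  toFun x := f (update a l x)
  map_add' := hf.2.1 a l hl
  map_smul' := hf.2.2 a l hl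

lemma IsMultilinearOfArity.of_linearMap (hdep : DependsOnFirst p f)
    (hlin : ∀ (a : ℕ → A) (l : ℕ), l < p → ∃ φ : A →ₗ[k] A, ∀ x, f (update a l x) = φ x) :
    IsMultilinearOfArity k p f := by
  refine ⟨hdep, fun a l hl x y => ?_, fun a l hl c x => ?_⟩ <;>
  · obtain ⟨φ, hφ⟩ := hlin a l hl
    simp only [hφ, map_add, map_smul]

lemma IsMultilinearOfArity.apply_insertAt (hf : IsMultilinearOfArity k p f)
    (hg : IsMultilinearOfArity k q g) {i : ℕ} (hi : i < p) :
    IsMultilinearOfArity k (p + q - 1) (fun a => f (insertAt i q g a)) := by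
  refine .of_linearMap (fun a b hab => hf.1 _ _ fun l hl => ?_) fun a l hl => ?_
  · rcases lt_trichotomy l i with h | rfl | h
    · rw [insertAt_of_lt h, insertAt_of_lt h]
      exact hab l (by omega)
    · rw [insertAt_self, insertAt_self]
      exact hg.1 _ _ fun m hm => hab _ (by omega)
    · rw [insertAt_of_gt h, insertAt_of_gt h]
      exact hab _ (by omega)
  · rcases lt_or_ge l i with h | h
    · exact ⟨hf.slotLinearMap (insertAt i q g a) (show l < p by omega),
        fun x => by rw [insertAt_update_of_lt h]; rfl⟩
    rcases lt_or_ge l (i + q) with h' | h'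
    · exact ⟨(hf.slotLinearMap (insertAt i q g a) hi).comp
        (hg.slotLinearMap (fun m => a (i + m)) (show l - i < q by omega)),
        fun x => by rw [insertAt_update_of_le_of_lt h h']; rfl⟩
    · exact ⟨hf.slotLinearMap (insertAt i q g a) (show l - q + 1 < p by omega),
        fun x => by rw [insertAt_update_of_le hg.1 h']; rfl⟩

lemma IsMultilinearOfArity.gcomp (hf : IsMultilinearOfArity k p f)
    (hg : IsMultilinearOfArity k q g) : IsMultilinearOfArity k (p + q - 1) (gcomp p q f g) := by
  show _ ∈ multilinearCochains k A _
  rw [gcomp_eq_sum]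
  exact AddSubgroup.sum_mem _ fun i hi =>
    AddSubgroup.zsmul_mem _ (hf.apply_insertAt hg (mem_range.mp hi)) _

lemma IsMultilinearOfArity.gbracket (hf : IsMultilinearOfArity k p f)
    (hg : IsMultilinearOfArity k q g) :
    IsMultilinearOfArity k (p + q - 1) (gbracket p q f g) := by
  have hgf := hg.gcomp hf
  rw [add_comm q p] at hgf
  exact AddSubgroup.sub_mem (multilinearCochains k A _) (hf.gcomp hg)
    (AddSubgroup.zsmul_mem _ hgf _)

end Multilinearity

lemma sum_range_add_eq_add_add {M : Type*} [AddCommMonoid M] (F : ℕ → M) {i p : ℕ} (Q : ℕ)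
    (hi : i < p) :
    ∑ j ∈ range (p + Q), F j
      = ∑ j ∈ range i, F j + ∑ m ∈ range (Q + 1), F (i + m) + ∑ u ∈ Ico (i + 1) p, F (u + Q) := by
  rw [← sum_range_add_sum_Ico _ (show i ≤ p + Q by omega),
    ← sum_Ico_consecutive _ (show i ≤ i + (Q + 1) by omega) (show i + (Q + 1) ≤ p + Q by omega),
    sum_Ico_eq_sum_range, sum_Ico_add', add_assoc, add_tsub_cancel_left,
    show i + 1 + Q = i + (Q + 1) by omega]

section PreLie

variable {A : Type*} [AddCommGroup A]

/-- The brace `f{g, h}`: `g` and `h`, of arities `Q + 1` and `R + 1`, inserted into the slots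
`j < i` of `f`. -/
def gbrace (p Q R : ℕ) (f g h : (ℕ → A) → A) : (ℕ → A) → A := fun a =>
  ∑ i ∈ range p, ∑ j ∈ range i,
    ((-1 : ℤ) ^ (j * Q + i * R)) • f (insertAt i (R + 1) h (insertAt j (Q + 1) g a))

variable {p Q R : ℕ} {f g h : (ℕ → A) → A}

lemma gcomp_gcomp_apply (p Q R : ℕ) (f g h : (ℕ → A) → A) (a : ℕ → A) :
    gcomp (p + Q) (R + 1) (gcomp p (Q + 1) f g) h a
      = ∑ i ∈ range p, ∑ j ∈ range (p + Q),
          ((-1 : ℤ) ^ (j * R + i * Q)) • f (insertAt i (Q + 1) g (insertAt j (R + 1) h a)) := by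
  simp only [gcomp_apply, add_tsub_cancel_right, smul_sum, smul_smul, ← pow_add]
  exact sum_comm

lemma sum_nested_insertions_eq_gcomp_gcomp (hf : SlotAdditive p f) (a : ℕ → A) :
    ∑ i ∈ range p, ∑ m ∈ range (Q + 1), ((-1 : ℤ) ^ ((i + m) * R + i * Q)) •
        f (insertAt i (Q + 1) g (insertAt (i + m) (R + 1) h a))
      = gcomp p (Q + R + 1) f (gcomp (Q + 1) (R + 1) g h) a := by
  rw [gcomp_apply]
  refine sum_congr rfl fun i hi => ?_
  rw [gcomp_eq_sum, ← hf.insertAtHom_apply (mem_range.mp hi), map_sum, smul_sum]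
  refine sum_congr rfl fun m hm => ?_
  rw [map_zsmul, hf.insertAtHom_apply, smul_smul, ← pow_add, add_tsub_cancel_right,
    add_tsub_cancel_right, insertAt_insertAt_of_le_of_lt (mem_range.mp hm),
    show Q + 1 + (R + 1) - 1 = Q + R + 1 by omega]
  congr 2
  ring

lemma sum_separated_insertions_eq_gbrace (hg : DependsOnFirst (Q + 1) g) (a : ℕ → A) :
    ∑ i ∈ range p, ∑ u ∈ Ico (i + 1) p, ((-1 : ℤ) ^ ((u + Q) * R + i * Q)) •
        f (insertAt i (Q + 1) g (insertAt (u + Q) (R + 1) h a))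
      = ((-1 : ℤ) ^ (Q * R)) • gbrace p Q R f g h a := by
  rw [range_eq_Ico, sum_Ico_Ico_comm', gbrace, smul_sum]
  simp only [← range_eq_Ico]
  refine sum_congr rfl fun u _ => ?_
  rw [smul_sum]
  refine sum_congr rfl fun i hi => ?_
  rw [insertAt_insertAt_of_lt (mem_range.mp hi) hg, smul_smul, ← pow_add]
  congr 2
  ring

-- Split the slots `j` of `h` in `(f ∘ g) ∘ h` according to whether `h` lands left of, inside,
-- or right of the copy of `g` in slot `i`.
lemma gcomp_gcomp_apply_eq_add (hf : SlotAdditive p f) (hg : DependsOnFirst (Q + 1) g)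
    (a : ℕ → A) :
    gcomp (p + Q) (R + 1) (gcomp p (Q + 1) f g) h a
      = gcomp p (Q + R + 1) f (gcomp (Q + 1) (R + 1) g h) a
        + gbrace p R Q f h g a + ((-1 : ℤ) ^ (Q * R)) • gbrace p Q R f g h a := by
  rw [gcomp_gcomp_apply, ← sum_nested_insertions_eq_gcomp_gcomp hf,
    ← sum_separated_insertions_eq_gbrace hg, gbrace, ← sum_add_distrib, ← sum_add_distrib]
  refine sum_congr rfl fun i hi => ?_
  rw [sum_range_add_eq_add_add _ Q (mem_range.mp hi)]
  abel

theorem gcomp_preLie {p q r : ℕ} (hq : 1 ≤ q) (hr : 1 ≤ r) {f g h : (ℕ → A) → A}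
    (hf : SlotAdditive p f) (hg : DependsOnFirst q g) (hh : DependsOnFirst r h) :
    gcomp (p + q - 1) r (gcomp p q f g) h - gcomp p (q + r - 1) f (gcomp q r g h)
      = ((-1 : ℤ) ^ ((q - 1) * (r - 1))) •
          (gcomp (p + r - 1) q (gcomp p r f h) g - gcomp p (q + r - 1) f (gcomp r q h g)) := by
  obtain ⟨Q, rfl⟩ := Nat.exists_eq_add_of_le' hq
  obtain ⟨R, rfl⟩ := Nat.exists_eq_add_of_le' hr
  funext a
  have hgh := gcomp_gcomp_apply_eq_add (R := R) (h := h) hf hg a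
  have hhg := gcomp_gcomp_apply_eq_add (R := Q) (h := g) hf hh a
  simp only [Pi.sub_apply, Pi.smul_apply, add_tsub_cancel_right,
    show p + (Q + 1) - 1 = p + Q by omega, show p + (R + 1) - 1 = p + R by omega,
    show Q + 1 + (R + 1) - 1 = Q + R + 1 by omega, show R + Q + 1 = Q + R + 1 by omega] at hhg ⊢
  rw [hgh, hhg, mul_comm R Q, smul_sub, smul_add, smul_add, neg_one_pow_smul_neg_one_pow_smul]
  abel

end PreLie

section GradedLie

variable {A : Type*} [AddCommGroup A]

theorem gbracket_antisymm (p q : ℕ) (f g : (ℕ → A) → A) :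
    gbracket p q f g = -(((-1 : ℤ) ^ ((p - 1) * (q - 1))) • gbracket q p g f) := by
  rw [gbracket_eq, gbracket_eq, mul_comm (q - 1), smul_sub, neg_one_pow_smul_neg_one_pow_smul]
  abel

theorem gbracket_jacobi {p q r : ℕ} (hp : 1 ≤ p) (hq : 1 ≤ q) (hr : 1 ≤ r)
    {f g h : (ℕ → A) → A} (hfd : DependsOnFirst p f) (hfa : SlotAdditive p f)
    (hgd : DependsOnFirst q g) (hga : SlotAdditive q g)
    (hhd : DependsOnFirst r h) (hha : SlotAdditive r h) :
    gbracket p (q + r - 1) f (gbracket q r g h)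
      = gbracket (p + q - 1) r (gbracket p q f g) h
        + ((-1 : ℤ) ^ ((p - 1) * (q - 1))) • gbracket q (p + r - 1) g (gbracket p r f h) := by
  have hfgh := gcomp_preLie hq hr hfa hgd hhd
  have hgfh := gcomp_preLie hp hr hga hfd hhd
  have hhfg := gcomp_preLie hp hq hha hfd hgd
  rw [add_comm q p] at hgfh
  rw [add_comm r p, add_comm r q] at hhfg
  simp only [gbracket_eq, gcomp_sub_left, gcomp_zsmul_left, gcomp_sub_right hfa,
    gcomp_zsmul_right hfa, gcomp_sub_right hga, gcomp_zsmul_right hga, gcomp_sub_right hha,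
    gcomp_zsmul_right hha]
  rw [sub_eq_iff_eq_add.mp hfgh, sub_eq_iff_eq_add.mp hgfh, sub_eq_iff_eq_add.mp hhfg]
  have e₁ : (p - 1) * (q + r - 1 - 1) = (p - 1) * (q - 1) + (p - 1) * (r - 1) := by
    rw [← mul_add]; congr 1; omega
  have e₂ : (p + q - 1 - 1) * (r - 1) = (p - 1) * (r - 1) + (q - 1) * (r - 1) := by
    rw [← add_mul]; congr 1; omega
  have e₃ : (q - 1) * (p + r - 1 - 1) = (p - 1) * (q - 1) + (q - 1) * (r - 1) := by
    rw [mul_comm (p - 1), ← mul_add]; congr 1; omega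
  simp only [e₁, e₂, e₃, pow_add]
  rcases neg_one_pow_eq_or ℤ ((p - 1) * (q - 1)) with s₁ | s₁ <;>
  rcases neg_one_pow_eq_or ℤ ((p - 1) * (r - 1)) with s₂ | s₂ <;>
  rcases neg_one_pow_eq_or ℤ ((q - 1) * (r - 1)) with s₃ | s₃ <;>
  simp only [s₁, s₂, s₃] <;> module

end GradedLie

/-- For a vector space `A` over a field `k`, the Gerstenhaber bracket
on multilinear maps (a `p`-multilinear map having degree `p−1`) is closed, graded
antisymmetric, and satisfies the graded Jacobi identity; that is,
`⊕_{n≥1} Hom(A^{⊗n}, A)` is a graded Lie algebra under the Gerstenhaber bracket. -/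
theorem gerstenhaber_bracket_graded_lie
    {k A : Type*} [Field k] [AddCommGroup A] [Module k A] :
    -- closure: the bracket of a `p`- and a `q`-cochain is a `(p+q−1)`-cochain
    (∀ (p q : ℕ), 1 ≤ p → 1 ≤ q → ∀ f g : (ℕ → A) → A,
       IsMultilinearOfArity k p f → IsMultilinearOfArity k q g →
       IsMultilinearOfArity k (p + q - 1) (gbracket p q f g)) ∧
    -- graded antisymmetry
    (∀ (p q : ℕ), 1 ≤ p → 1 ≤ q → ∀ f g : (ℕ → A) → A,
       IsMultilinearOfArity k p f → IsMultilinearOfArity k q g →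
       ∀ a : ℕ → A,
         gbracket p q f g a = -(((-1 : ℤ) ^ ((p - 1) * (q - 1))) • gbracket q p g f a)) ∧
    -- graded Jacobi identity
    (∀ (p q r : ℕ), 1 ≤ p → 1 ≤ q → 1 ≤ r → ∀ f g h : (ℕ → A) → A,
       IsMultilinearOfArity k p f → IsMultilinearOfArity k q g →
       IsMultilinearOfArity k r h →
       ∀ a : ℕ → A,
         gbracket p (q + r - 1) f (gbracket q r g h) a
           = gbracket (p + q - 1) r (gbracket p q f g) h a
             + ((-1 : ℤ) ^ ((p - 1) * (q - 1))) •
                 gbracket q (p + r - 1) g (gbracket p r f h) a) := by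
  refine ⟨fun p q _ _ f g hf hg => hf.gbracket hg,
    fun p q _ _ f g _ _ => congrFun (gbracket_antisymm p q f g),
    fun p q r hp hq hr f g h hf hg hh => ?_⟩
  exact congrFun (gbracket_jacobi hp hq hr hf.1 hf.2.1 hg.1 hg.2.1 hh.1 hh.2.1)
end
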